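/- arXiv:2004.02717 — 3 statements merged into one kernel-verified Lean document; each statement's English description precedes it below -/
import Mathlib

section
/- If ps_a does not divide b_a, then the strengthened capacity constraint Σ_{p: a∈p} (bw^{d(p)}_{a,p}(c)/ps_a) y_p ≤ ⌊b_a/ps_a⌋ is strictly stronger than the original constraint over the nonnegative reals: the polytope it defines (together with y_p ≥ 0) is strictly contained in the polytope defined by the original constraint Σ_{p: a∈p} bw^{d(p)}_{a,p}(c) y_p ≤ b_a, provided at least one coefficient bw^{d(p)}_{a,p}(c) is positive. -/
/-!
Since `ps` divides every coefficient, dividing the weights by `ps` turns the strengthened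
constraint into the original one with right-hand side `ps * ⌊b / ps⌋`, which is `< b` because
`ps ∤ b`. The point on the axis of `p0` where the original constraint is tight lies in the
larger polytope but not in the smaller one.
-/

open Finset

section Knapsack

variable {P : Type*} [Fintype P]

def knapsackPolytope (w : P → ℝ) (β : ℝ) : Set (P → ℝ) :=
  {y | (∀ p, 0 ≤ y p) ∧ ∑ p, w p * y p ≤ β}

theorem knapsackPolytope_mono (w : P → ℝ) {β β' : ℝ} (h : β ≤ β') :
    knapsackPolytope w β ⊆ knapsackPolytope w β' :=
  fun _ ⟨hy, hsum⟩ => ⟨hy, hsum.trans h⟩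

theorem knapsackPolytope_div_weights (w : P → ℝ) {s : ℝ} (hs : 0 < s) (β : ℝ) :
    knapsackPolytope (fun p => w p / s) β = knapsackPolytope w (β * s) := by
  ext y
  simp only [knapsackPolytope, Set.mem_ofPred_eq, div_mul_eq_mul_div, ← Finset.sum_div,
    div_le_iff₀ hs]

theorem knapsackPolytope_ssubset_of_lt (w : P → ℝ) {p₀ : P} (hw : 0 < w p₀) {β β' : ℝ}
    (hβ' : 0 ≤ β') (h : β < β') :
    knapsackPolytope w β ⊂ knapsackPolytope w β' := by
  classical
  set y : P → ℝ := Pi.single p₀ (β' / w p₀)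
  have hsum : ∑ p, w p * y p = β' := by
    simp [y, Pi.single_apply, mul_div_cancel₀ _ hw.ne']
  have hy : ∀ p, 0 ≤ y p := fun p => by
    by_cases hp : p = p₀ <;> simp [y, hp, div_nonneg hβ' hw.le]
  refine (Set.ssubset_iff_of_subset (knapsackPolytope_mono w h.le)).2
    ⟨y, ⟨hy, hsum.le⟩, fun ⟨_, hle⟩ => ?_⟩
  linarith

end Knapsack

theorem Int.floor_div_mul_lt_of_forall_ne {K : Type*} [Field K] [LinearOrder K]
    [IsStrictOrderedRing K] [FloorRing K] {b d : K} (hd : 0 < d) (hb : ∀ k : ℤ, (k : K) * d ≠ b) :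
    (⌊b / d⌋ : K) * d < b :=
  lt_of_le_of_ne ((le_div_iff₀ hd).1 (Int.floor_le _)) (hb _)

theorem strengthened_polytope_strictly_smaller_general
    {P : Type} [Fintype P] (coef : P → ℕ) (ps : ℕ)
    (hdvd : ∀ p, ps ∣ coef p) (b : ℚ) (hb : 0 < b)
    (hnd : ∀ k : ℤ, (k : ℚ) * (ps : ℚ) ≠ b)
    (p0 : P) (hp0 : 0 < coef p0) :
    {y : P → ℝ | (∀ p, 0 ≤ y p) ∧
        ∑ p : P, ((coef p / ps : ℕ) : ℝ) * y p ≤ ((⌊b / ps⌋ : ℤ) : ℝ)} ⊂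
      {y : P → ℝ | (∀ p, 0 ≤ y p) ∧ ∑ p : P, (coef p : ℝ) * y p ≤ ((b : ℚ) : ℝ)} := by
  have hps : (0 : ℝ) < ps := by exact_mod_cast Nat.pos_of_dvd_of_pos (hdvd p0) hp0
  have hweights : (fun p => ((coef p / ps : ℕ) : ℝ)) = fun p => (coef p : ℝ) / ps :=
    funext fun p => Nat.cast_div (hdvd p) hps.ne'
  have hcap : ((⌊b / ps⌋ : ℤ) : ℝ) * ps < b := by
    exact_mod_cast Int.floor_div_mul_lt_of_forall_ne (by exact_mod_cast hps) hnd
  change knapsackPolytope (fun p => ((coef p / ps : ℕ) : ℝ)) ⌊b / ps⌋ ⊂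
    knapsackPolytope (fun p => (coef p : ℝ)) b
  rw [hweights, knapsackPolytope_div_weights _ hps]
  exact knapsackPolytope_ssubset_of_lt _ (by exact_mod_cast hp0) (by positivity) hcap

/-- If `ps` does not divide the capacity `b` and some coefficient is positive, the
polytope of the strengthened constraint is strictly contained in that of the original
capacity constraint (over nonnegative reals). -/
theorem strengthened_polytope_strictly_smaller
    {P : Type} [Fintype P] (coef : P → ℕ) (ps : ℕ) (hps : 0 < ps)
    (hdvd : ∀ p, ps ∣ coef p) (b : ℚ) (hb : 0 < b)
    (hnd : ∀ k : ℤ, (k : ℚ) * (ps : ℚ) ≠ b)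
    (p0 : P) (hp0 : 0 < coef p0) :
    {y : P → ℝ | (∀ p, 0 ≤ y p) ∧
        ∑ p : P, ((coef p / ps : ℕ) : ℝ) * y p ≤ ((⌊b / ps⌋ : ℤ) : ℝ)} ⊂
      {y : P → ℝ | (∀ p, 0 ≤ y p) ∧ ∑ p : P, (coef p : ℝ) * y p ≤ ((b : ℚ) : ℝ)} :=
  strengthened_polytope_strictly_smaller_general coef ps hdvd b hb hnd p0 hp0
end

section
/- The decision version DND of the Deterministic Networking problem is NP-hard: the k-arc-disjoint-paths problem in a directed graph reduces in polynomial time to DND. Concretely, with C = 1 cycle, k identical demands from s to t each with bw^d_0 = 1, unit arc capacities b_a = 1, and threshold ℓ = k, the DN instance has a feasible solution of objective value ≥ k if and only if G contains k pairwise arc-disjoint directed s-t paths. -/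
open scoped Classical

/-- A directed s-t path in the arc set `E`, given as a nonempty list of arcs without
repetition, consecutive arcs matching, starting at `s` and ending at `t`. -/
def IsSTPath {V : Type} (E : Finset (V × V)) (s t : V) (l : List (V × V)) : Prop :=
  l ≠ [] ∧ l.Nodup ∧ (∀ a ∈ l, a ∈ E) ∧
    (l.head?.map Prod.fst = some s) ∧ (l.getLast?.map Prod.snd = some t) ∧
    l.Chain' (fun a b => a.2 = b.1)

open Finset

theorem card_filter_mem_le_one_iff {ι α : Type*} [Fintype ι] (f : ι → List α) :
    (∀ a, #{i | a ∈ f i} ≤ 1) ↔ ∀ i j, i ≠ j → ∀ a, a ∈ f i → a ∉ f j := by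
  simp only [card_le_one, mem_filter, mem_univ, true_and]
  constructor
  · exact fun h i j hij a hai haj => hij (h a i hai j haj)
  · exact fun h a i hai j haj => by_contra fun hij => h i j hij a hai haj

theorem exists_eq_some_of_card_le_card_filter_ne_none {ι β : Type*} [Fintype ι]
    {σ : ι → Option β} (h : Fintype.card ι ≤ #{i | σ i ≠ none}) :
    ∃ f : ι → β, σ = fun i => some (f i) := by
  have hall : ∀ i, σ i ≠ none := by
    have := (card_filter_le univ fun i => σ i ≠ none).antisymm h
    simpa using card_filter_eq_iff.1 this
  choose f hf using fun i => Option.ne_none_iff_exists'.1 (hall i)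
  exact ⟨f, funext hf⟩

theorem DND_kDisjointPaths_reduction_general
    {V : Type} [DecidableEq V] (E : Finset (V × V)) (s t : V) (k : ℕ) :
    (∃ σ : Fin k → Option (List (V × V)),
      (∀ i p, σ i = some p → IsSTPath E s t p) ∧
      -- unit capacity constraint on every arc (C = 1, bw = 1)
      (∀ a : V × V,
        (Finset.univ.filter (fun i : Fin k => ∃ p, σ i = some p ∧ a ∈ p)).card ≤ 1) ∧
      -- objective value at least ℓ = k: all k unit demands are accepted
      k ≤ (Finset.univ.filter (fun i : Fin k => σ i ≠ none)).card) ↔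
    (∃ f : Fin k → List (V × V), (∀ i, IsSTPath E s t (f i)) ∧
      ∀ i j, i ≠ j → ∀ a, a ∈ f i → a ∉ f j) := by
  constructor
  · rintro ⟨σ, hpath, hcap, hcard⟩
    obtain ⟨f, rfl⟩ := exists_eq_some_of_card_le_card_filter_ne_none (σ := σ)
      (by convert hcard; exact Fintype.card_fin k)
    refine ⟨f, fun i => hpath i _ rfl, (card_filter_mem_le_one_iff f).1 fun a => ?_⟩
    convert hcap a using 3
    simp
  · rintro ⟨f, hpath, hdisj⟩
    refine ⟨fun i => some (f i), ?_, ?_, ?_⟩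
    · rintro i p ⟨⟩
      exact hpath i
    · intro a
      convert (card_filter_mem_le_one_iff f).2 hdisj a using 3
      simp
    · simp

/-- NP-hardness reduction from `k` arc-disjoint paths: with `C = 1`, `k` identical unit
demands from `s` to `t`, unit arc capacities and threshold `ℓ = k`, the DN instance has
a feasible solution of value `≥ k` iff `G` contains `k` pairwise arc-disjoint
s-t paths. -/
theorem DND_kDisjointPaths_reduction
    {V : Type} [Fintype V] [DecidableEq V] (E : Finset (V × V)) (s t : V) (k : ℕ) :
    (∃ σ : Fin k → Option (List (V × V)),
      (∀ i p, σ i = some p → IsSTPath E s t p) ∧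
      -- unit capacity constraint on every arc (C = 1, bw = 1)
      (∀ a : V × V,
        (Finset.univ.filter (fun i : Fin k => ∃ p, σ i = some p ∧ a ∈ p)).card ≤ 1) ∧
      -- objective value at least ℓ = k: all k unit demands are accepted
      k ≤ (Finset.univ.filter (fun i : Fin k => σ i ≠ none)).card) ↔
    (∃ f : Fin k → List (V × V), (∀ i, IsSTPath E s t (f i)) ∧
      ∀ i j, i ≠ j → ∀ a, a ∈ f i → a ∉ f j) :=
  DND_kDisjointPaths_reduction_general E s t k
end

section
/- In the extended graph construction, a path in G^ext from s^d_0 to t^d_{c'} (for some c') corresponds bijectively to an s-path p in G from s^d to t^d with cycle-shift sequence (r_1,...,r_{|p|-1}), 0 ≤ r_k ≤ R, where each arc of the G^ext-path has the form (u_c, v_{(c + Δ_{(u,v)} + r) mod C}), and the subscript c of each visited node u_c equals Δ_u(p) mod C. -/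
/-- An s-path from `s` to `t`: a path with `n ≥ 1` arcs (`node i`, `node (i+1)` for
`i < n`) together with cycle shifts `shift i ≤ R` at the intermediate nodes
`i = 1, …, n-1` (no shift at the source or the destination). Values outside the
meaningful range are pinned so that the structure carries no junk data. -/
structure SPath (V : Type) (A : Set (V × V)) (Δ : V × V → ℕ) (R : ℕ) (s t : V) where
  n : ℕ
  hn : 0 < n
  node : ℕ → V
  shift : ℕ → ℕ
  hs : node 0 = s
  ht : node n = t
  hjunknode : ∀ i, n < i → node i = t
  harc : ∀ i < n, (node i, node (i + 1)) ∈ A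
  hshift0 : shift 0 = 0
  hshiftR : ∀ i, 0 < i → i < n → shift i ≤ R
  hshiftjunk : ∀ i, n ≤ i → shift i = 0

/-- Cumulative delay `Δ_u(p)` at the `k`-th node of the s-path `p`: sum of the first
`k` arc delays plus all cycle shifts applied up to (and including) that node. -/
def SPath.cum {V : Type} {A : Set (V × V)} {Δ : V × V → ℕ} {R : ℕ} {s t : V}
    (p : SPath V A Δ R s t) (k : ℕ) : ℕ :=
  (∑ j ∈ Finset.range k, Δ (p.node j, p.node (j + 1))) +
    ∑ j ∈ Finset.range (k + 1), p.shift j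

/-- A path in the extended graph `G^ext` from `s_0` to `t_{c'}`: each arc has the form
`(u_c, v_{(c + Δ_{(u,v)} + r) % C})` with `0 ≤ r ≤ R` (and `r = 0` on the arc entering
the destination, which carries no shift). Junk values are pinned. -/
structure ExtPath (V : Type) (A : Set (V × V)) (Δ : V × V → ℕ) (R C : ℕ) (s t : V) where
  n : ℕ
  hn : 0 < n
  node : ℕ → V
  cyc : ℕ → ℕ
  hcyclt : ∀ i, cyc i < C
  hs : node 0 = s
  hc0 : cyc 0 = 0
  ht : node n = t
  hjunknode : ∀ i, n < i → node i = t
  hjunkcyc : ∀ i, n < i → cyc i = 0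
  harc : ∀ i < n, (node i, node (i + 1)) ∈ A ∧
    ∃ r ≤ R, (i + 1 = n → r = 0) ∧
      cyc (i + 1) = (cyc i + Δ (node i, node (i + 1)) + r) % C

/-!
Both kinds of path share the node sequence; they differ only in how the delays are
recorded. Along an s-path the subscript `Δ_u(p) mod C` grows from node to node by
`Δ_a + r` modulo `C`, which is exactly an arc of `G^ext`. Conversely the shift `r` on an
arc of `G^ext` is recovered from the two subscripts as their difference minus `Δ_a`
modulo `C`, and this recovery is exact because `0 ≤ r ≤ R < C`.
-/

/-- `C - x % C` is the additive inverse of `x` modulo `C`. -/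
theorem Nat.ModEq.add_sub_mod_of_add {C a x r : ℕ} (hC : 0 < C) (h : a ≡ x + r [MOD C]) :
    a + (C - x % C) ≡ r [MOD C] := by
  have hx := Nat.mod_lt x hC
  refine Nat.ModEq.add_right_cancel' (x % C) ?_
  calc a + (C - x % C) + x % C = a + C := by omega
    _ ≡ a [MOD C] := Nat.add_modEq_right
    _ ≡ x + r [MOD C] := h
    _ ≡ x % C + r [MOD C] := (Nat.mod_modEq x C).symm.add_right r
    _ = r + x % C := add_comm _ _

variable {V : Type} {A : Set (V × V)} {Δ : V × V → ℕ} {R C : ℕ} {s t : V}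

namespace SPath

theorem ext {p q : SPath V A Δ R s t} (hn : p.n = q.n) (hnode : p.node = q.node)
    (hshift : p.shift = q.shift) : p = q := by
  cases p; cases q; simp_all

theorem shift_le (p : SPath V A Δ R s t) (i : ℕ) : p.shift i ≤ R := by
  rcases Nat.eq_zero_or_pos i with rfl | hi
  · simp [p.hshift0]
  · rcases lt_or_ge i p.n with hin | hin
    · exact p.hshiftR i hi hin
    · simp [p.hshiftjunk i hin]

theorem cum_zero (p : SPath V A Δ R s t) : p.cum 0 = 0 := by
  simp [SPath.cum, p.hshift0]

theorem cum_succ (p : SPath V A Δ R s t) (k : ℕ) :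
    p.cum (k + 1) = p.cum k + Δ (p.node k, p.node (k + 1)) + p.shift (k + 1) := by
  simp only [SPath.cum, Finset.sum_range_succ _ k, Finset.sum_range_succ _ (k + 1)]
  ring

/-- Since every shift lies in `[0, R] ⊆ [0, C)`, the shifts can be read off the cumulative
delays modulo `C`. -/
theorem ext_of_cum_modEq (hRC : R < C) {p q : SPath V A Δ R s t} (hn : p.n = q.n)
    (hnode : p.node = q.node) (hcum : ∀ k ≤ p.n, p.cum k ≡ q.cum k [MOD C]) : p = q := by
  refine ext hn hnode (funext fun k => ?_)
  rcases k with _ | k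
  · rw [p.hshift0, q.hshift0]
  rcases le_or_gt (k + 1) p.n with hk | hk
  · have hstep := hcum (k + 1) hk
    rw [cum_succ, cum_succ, hnode] at hstep
    have hprev := (hcum k (by omega)).add_right (Δ (q.node k, q.node (k + 1)))
    exact (hprev.add_left_cancel hstep).eq_of_lt_of_lt
      ((p.shift_le _).trans_lt hRC) ((q.shift_le _).trans_lt hRC)
  · rw [p.hshiftjunk _ hk.le, q.hshiftjunk _ (hn ▸ hk.le)]

def toExtPath (hC : 0 < C) (p : SPath V A Δ R s t) : ExtPath V A Δ R C s t where
  n := p.n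
  hn := p.hn
  node := p.node
  cyc k := if k ≤ p.n then p.cum k % C else 0
  hcyclt i := by split <;> [exact Nat.mod_lt _ hC; exact hC]
  hs := p.hs
  hc0 := by simp [p.cum_zero]
  ht := p.ht
  hjunknode := p.hjunknode
  hjunkcyc i hi := if_neg (by omega)
  harc i hi := by
    refine ⟨p.harc i hi, p.shift (i + 1), p.shift_le _,
      fun h => p.hshiftjunk _ h.ge, ?_⟩
    rw [if_pos (by omega), if_pos hi.le, cum_succ, add_assoc, add_assoc, Nat.mod_add_mod]

theorem toExtPath_cyc (hC : 0 < C) (p : SPath V A Δ R s t) {k : ℕ} (hk : k ≤ p.n) :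
    (p.toExtPath hC).cyc k = p.cum k % C :=
  if_pos hk

end SPath

namespace ExtPath

theorem ext_of_cyc_eq {p q : ExtPath V A Δ R C s t} (hn : p.n = q.n)
    (hnode : p.node = q.node) (hcyc : ∀ k ≤ p.n, p.cyc k = q.cyc k) : p = q := by
  have hcyc' : p.cyc = q.cyc := funext fun k => by
    rcases le_or_gt k p.n with hk | hk
    · exact hcyc k hk
    · rw [p.hjunkcyc k hk, q.hjunkcyc k (hn ▸ hk)]
  cases p; cases q; simp_all

/-- The shift of the arc entering the `k`-th node, recovered from the subscripts. -/
def shift (q : ExtPath V A Δ R C s t) : ℕ → ℕ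
  | 0 => 0
  | k + 1 =>
    if k + 1 < q.n then
      (q.cyc (k + 1) + (C - (q.cyc k + Δ (q.node k, q.node (k + 1))) % C)) % C
    else 0

theorem exists_shift_succ_eq_mod (hC : 0 < C) (q : ExtPath V A Δ R C s t) {k : ℕ}
    (hk : k < q.n) : ∃ r ≤ R, q.shift (k + 1) = r % C ∧
      q.cyc (k + 1) = (q.cyc k + Δ (q.node k, q.node (k + 1)) + r) % C := by
  obtain ⟨-, r, hrR, hlast, hcyc⟩ := q.harc k hk
  refine ⟨r, hrR, ?_, hcyc⟩
  by_cases hkn : k + 1 < q.n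
  · rw [shift, if_pos hkn]
    exact (hcyc ▸ Nat.mod_modEq _ C).add_sub_mod_of_add hC
  · rw [shift, if_neg hkn, hlast (by omega), Nat.zero_mod]

theorem shift_succ_le (hC : 0 < C) (q : ExtPath V A Δ R C s t) {k : ℕ} (hk : k < q.n) :
    q.shift (k + 1) ≤ R := by
  obtain ⟨r, hrR, hshift, -⟩ := q.exists_shift_succ_eq_mod hC hk
  exact hshift ▸ (Nat.mod_le r C).trans hrR

theorem cyc_succ (hC : 0 < C) (q : ExtPath V A Δ R C s t) {k : ℕ} (hk : k < q.n) :
    q.cyc (k + 1) = (q.cyc k + Δ (q.node k, q.node (k + 1)) + q.shift (k + 1)) % C := by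
  obtain ⟨r, -, hshift, hcyc⟩ := q.exists_shift_succ_eq_mod hC hk
  rw [hcyc, hshift, Nat.add_mod_mod]

def toSPath (hC : 0 < C) (q : ExtPath V A Δ R C s t) : SPath V A Δ R s t where
  n := q.n
  hn := q.hn
  node := q.node
  shift := q.shift
  hs := q.hs
  ht := q.ht
  hjunknode := q.hjunknode
  harc i hi := (q.harc i hi).1
  hshift0 := rfl
  hshiftR
    | i + 1, _, hi => q.shift_succ_le hC (by omega)
  hshiftjunk
    | 0, _ => rfl
    | i + 1, hi => if_neg (by omega)

theorem toSPath_cum_mod (hC : 0 < C) (q : ExtPath V A Δ R C s t) {k : ℕ} (hk : k ≤ q.n) :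
    (q.toSPath hC).cum k % C = q.cyc k := by
  induction k with
  | zero => rw [SPath.cum_zero, q.hc0, Nat.zero_mod]
  | succ k ih =>
    rw [SPath.cum_succ, q.cyc_succ hC hk, add_assoc, add_assoc, ← Nat.mod_add_mod,
      ih (by omega)]
    rfl

end ExtPath

def SPath.equivExtPath (hRC : R < C) : SPath V A Δ R s t ≃ ExtPath V A Δ R C s t :=
  have hC : 0 < C := Nat.zero_lt_of_lt hRC
  { toFun := toExtPath hC
    invFun := ExtPath.toSPath hC
    left_inv := fun p => ext_of_cum_modEq hRC rfl rfl fun k hk => by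
      rw [Nat.ModEq, ExtPath.toSPath_cum_mod hC (p.toExtPath hC) hk, toExtPath_cyc hC p hk]
    right_inv := fun q => ExtPath.ext_of_cyc_eq rfl rfl fun k hk => by
      rw [toExtPath_cyc hC (q.toSPath hC) hk, ExtPath.toSPath_cum_mod hC q hk] }

theorem spath_extpath_bijection_general
    {V : Type} (A : Set (V × V)) (Δ : V × V → ℕ) (R C : ℕ)
    (hRC : R < C) (s t : V) :
    ∃ e : SPath V A Δ R s t ≃ ExtPath V A Δ R C s t,
      ∀ p : SPath V A Δ R s t,
        (e p).n = p.n ∧ (∀ k, (e p).node k = p.node k) ∧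
        ∀ k ≤ p.n, (e p).cyc k = p.cum k % C :=
  ⟨SPath.equivExtPath hRC, fun p =>
    ⟨rfl, fun _ => rfl, fun _ hk => p.toExtPath_cyc (Nat.zero_lt_of_lt hRC) hk⟩⟩

/-- S-paths in `G` correspond bijectively to paths in the extended graph `G^ext`
from `s_0` to some `t_{c'}`: the bijection preserves the underlying nodes, and the
cycle subscript of each visited node `u` equals `Δ_u(p) mod C`. -/
theorem spath_extpath_bijection
    {V : Type} (A : Set (V × V)) (Δ : V × V → ℕ) (R C : ℕ)
    (hC : 0 < C) (hRC : R < C) (s t : V) :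
    ∃ e : SPath V A Δ R s t ≃ ExtPath V A Δ R C s t,
      ∀ p : SPath V A Δ R s t,
        (e p).n = p.n ∧ (∀ k, (e p).node k = p.node k) ∧
        ∀ k ≤ p.n, (e p).cyc k = p.cum k % C :=
  spath_extpath_bijection_general A Δ R C hRC s t
end
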